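/- arXiv:1305.1062 — 2 statements merged into one kernel-verified Lean document; each statement's English description precedes it below -/
import Mathlib

section
/- Let U be an n × n upper triangular integer matrix with diagonal entries λ_1, 1, 1, …, 1 where λ_1 ≠ 0. Then the direct limit lim→(U, ℤ^n) is isomorphic to ℤ[1/λ_1] ⊕ ℤ^{n−1}. -/
/-!
Over `ℚ` the matrix `U` is invertible, so sending `x` in the `i`-th copy of `ℤⁿ` to `U⁻ⁱ x`
embeds `lim→(U, ℤⁿ)` into `ℚⁿ` with image `⋃ᵢ U⁻ⁱ ℤⁿ`. The first column of `U` is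
`(λ₁, 0, …, 0)` and its lower right block is unimodular, so `U v ∈ diag(λ₁ⁱ, 1, …, 1)⁻¹ ℤⁿ`
exactly when `v ∈ diag(λ₁ⁱ⁺¹, 1, …, 1)⁻¹ ℤⁿ`. Hence `U⁻ⁱ ℤⁿ = diag(λ₁ⁱ, 1, …, 1)⁻¹ ℤⁿ`, and the
union of these lattices is `ℤ[1/λ₁] × ℤⁿ⁻¹`.
-/

/-- `ℤ[1/d] = ⋃ᵢ (1/dⁱ)ℤ`, the subgroup of ℚ generated by the powers `1/dⁱ`. -/
def Zinv (d : ℤ) : AddSubgroup ℚ :=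
  AddSubgroup.closure {q : ℚ | ∃ i : ℕ, q = ((d : ℚ) ^ i)⁻¹}

open Matrix

namespace Module.DirectLimit

variable {R M V : Type*} [Semiring R] [AddCommMonoid M] [Module R M] [AddCommMonoid V]
  [Module R V] {f : M →ₗ[R] M} {ι : M →ₗ[R] V} {e : V ≃ₗ[R] V}

noncomputable def liftOfSemiconj (h : Function.Semiconj ι f e) :
    DirectLimit (fun _ : ℕ => M) (fun i j _ => f ^ (j - i)) →ₗ[R] V :=
  lift R ℕ _ _ (fun i => ((e.symm ^ i : V ≃ₗ[R] V) : V →ₗ[R] V) ∘ₗ ι) fun i j hij x => by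
    obtain ⟨p, rfl⟩ := Nat.exists_eq_add_of_le hij
    simp only [LinearMap.comp_apply, LinearEquiv.coe_coe, LinearEquiv.coe_pow,
      Module.End.coe_pow, Nat.add_sub_cancel_left, (h.iterate_right p).eq,
      Function.iterate_add_apply, (Function.LeftInverse.iterate e.symm_apply_apply p) _]

theorem liftOfSemiconj_of (h : Function.Semiconj ι f e) (i : ℕ) (x : M) :
    liftOfSemiconj h (of R ℕ _ _ i x) = e.symm^[i] (ι x) := by
  simp [liftOfSemiconj, LinearEquiv.coe_pow]

theorem liftOfSemiconj_injective (h : Function.Semiconj ι f e) (hι : Function.Injective ι) :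
    Function.Injective (liftOfSemiconj h) :=
  lift_injective _ _ fun i => by simpa using hι

theorem mem_range_liftOfSemiconj_iff (h : Function.Semiconj ι f e) {v : V} :
    v ∈ LinearMap.range (liftOfSemiconj h) ↔ ∃ i, e^[i] v ∈ LinearMap.range ι := by
  constructor
  · rintro ⟨z, rfl⟩
    induction z using DirectLimit.induction_on with
    | ih i x =>
      exact ⟨i, x, by
        rw [liftOfSemiconj_of, (Function.RightInverse.iterate e.apply_symm_apply i) _]⟩
  · rintro ⟨i, x, hx⟩
    exact ⟨of R ℕ _ _ i x, by
      rw [liftOfSemiconj_of, hx, (Function.LeftInverse.iterate e.symm_apply_apply i) _]⟩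

end Module.DirectLimit

theorem mem_Zinv_iff {d : ℤ} (hd : d ≠ 0) {q : ℚ} :
    q ∈ Zinv d ↔ ∃ i : ℕ, (d : ℚ) ^ i * q ∈ (⊥ : Subring ℚ) := by
  have hd' : (d : ℚ) ≠ 0 := Int.cast_ne_zero.2 hd
  constructor
  · intro hq
    induction hq using AddSubgroup.closure_induction with
    | mem q hq =>
      obtain ⟨i, rfl⟩ := hq
      exact ⟨i, by rw [mul_inv_cancel₀ (pow_ne_zero i hd')]; exact one_mem _⟩
    | zero => exact ⟨0, by simp⟩
    | add a b _ _ ha hb =>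
      obtain ⟨i, ha⟩ := ha
      obtain ⟨j, hb⟩ := hb
      have hab : (d : ℚ) ^ (i + j) * (a + b) =
          (d : ℚ) ^ j * ((d : ℚ) ^ i * a) + (d : ℚ) ^ i * ((d : ℚ) ^ j * b) := by ring
      refine ⟨i + j, hab ▸ add_mem ?_ ?_⟩
      · exact mul_mem (pow_mem (intCast_mem _ d) j) ha
      · exact mul_mem (pow_mem (intCast_mem _ d) i) hb
    | neg a _ ha =>
      obtain ⟨i, ha⟩ := ha
      exact ⟨i, by simpa using neg_mem ha⟩
  · rintro ⟨i, hi⟩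
    obtain ⟨k, hk⟩ := Subring.mem_bot.1 hi
    have hq : q = k • ((d : ℚ) ^ i)⁻¹ := by
      rw [zsmul_eq_mul, hk]
      field_simp
    rw [hq]
    exact zsmul_mem (AddSubgroup.subset_closure ⟨i, rfl⟩ : ((d : ℚ) ^ i)⁻¹ ∈ Zinv d) k

def intCastPi (n : Type*) : (n → ℤ) →ₗ[ℤ] (n → ℚ) :=
  ((Int.castAddHom ℚ).compLeft n).toIntLinearMap

theorem intCastPi_injective (n : Type*) : Function.Injective (intCastPi n) :=
  Int.cast_injective.comp_left

def intLattice (n : Type*) : AddSubgroup (n → ℚ) :=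
  (intCastPi n).toAddMonoidHom.range

theorem mem_intLattice_iff {n : Type*} {v : n → ℚ} :
    v ∈ intLattice n ↔ ∀ j, v j ∈ (⊥ : Subring ℚ) := by
  simp [intLattice, intCastPi, Subring.mem_bot, funext_iff, Classical.skolem]

namespace Matrix

theorem map_intCast_mulVec_mem_intLattice {k n : Type*} [Fintype n] (M : Matrix k n ℤ)
    {w : n → ℚ} (hw : w ∈ intLattice n) : M.map (↑) *ᵥ w ∈ intLattice k := by
  obtain ⟨c, rfl⟩ := hw
  exact ⟨M *ᵥ c, funext fun j => RingHom.map_mulVec (Int.castRingHom ℚ) M c j⟩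

theorem map_intCast_mulVec_mem_intLattice_iff {n : Type*} [Fintype n] [DecidableEq n]
    {M : Matrix n n ℤ} (hM : IsUnit M.det) {w : n → ℚ} :
    M.map (↑) *ᵥ w ∈ intLattice n ↔ w ∈ intLattice n := by
  refine ⟨fun h => ?_, M.map_intCast_mulVec_mem_intLattice⟩
  have hw : w = M⁻¹.map (↑) *ᵥ (M.map (↑) *ᵥ w) := by
    rw [mulVec_mulVec]
    change w = ((Int.castRingHom ℚ).mapMatrix M⁻¹ * (Int.castRingHom ℚ).mapMatrix M) *ᵥ w
    rw [← map_mul, nonsing_inv_mul M hM, map_one, one_mulVec]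
  exact hw ▸ M⁻¹.map_intCast_mulVec_mem_intLattice h

noncomputable def intCastMulVecEquiv {n : Type*} [Fintype n] [DecidableEq n] {U : Matrix n n ℤ}
    (hU : IsUnit (U.map (Int.cast : ℤ → ℚ)).det) : (n → ℚ) ≃ₗ[ℤ] (n → ℚ) :=
  ((U.map (↑)).toLinearEquiv' (invertibleOfIsUnitDet _ hU)).restrictScalars ℤ

theorem semiconj_intCastPi {n : Type*} [Fintype n] [DecidableEq n] {U : Matrix n n ℤ}
    (hU : IsUnit (U.map (Int.cast : ℤ → ℚ)).det) :
    Function.Semiconj (intCastPi n) U.mulVecLin (intCastMulVecEquiv hU) := fun x =>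
  funext fun j => RingHom.map_mulVec (Int.castRingHom ℚ) U x j

variable {R : Type*} {k m : ℕ}

theorem mulVec_apply_eq_add_dotProduct_tail [NonUnitalNonAssocSemiring R] {l : Type*}
    (A : Matrix l (Fin (m + 1)) R) (v : Fin (m + 1) → R) (i : l) :
    (A *ᵥ v) i = A i 0 * v 0 + (fun j => A i j.succ) ⬝ᵥ Fin.tail v := by
  simp [mulVec, dotProduct, Fin.sum_univ_succ, Fin.tail]

theorem tail_mulVec_of_col_zero [NonUnitalNonAssocSemiring R]
    {A : Matrix (Fin (k + 1)) (Fin (m + 1)) R} (hA : ∀ p : Fin k, A p.succ 0 = 0)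
    (v : Fin (m + 1) → R) :
    Fin.tail (A *ᵥ v) = A.submatrix Fin.succ Fin.succ *ᵥ Fin.tail v := by
  funext p
  simp [mulVec, dotProduct, Fin.sum_univ_succ, Fin.tail, hA]

theorem det_eq_mul_det_submatrix_succ [CommRing R] {A : Matrix (Fin (m + 1)) (Fin (m + 1)) R}
    (hA : ∀ p : Fin m, A p.succ 0 = 0) :
    A.det = A 0 0 * (A.submatrix Fin.succ Fin.succ).det := by
  simp [det_succ_column_zero A, Fin.sum_univ_succ, hA]

end Matrix

section FirstColumn

variable {m : ℕ} {U : Matrix (Fin (m + 1)) (Fin (m + 1)) ℤ}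

/-- The lattice `diag(dⁱ, 1, …, 1)⁻¹ ℤᵐ⁺¹`. -/
def scaledLattice (d : ℤ) (i : ℕ) : Set (Fin (m + 1) → ℚ) :=
  {v | (d : ℚ) ^ i * v 0 ∈ (⊥ : Subring ℚ) ∧ Fin.tail v ∈ intLattice (Fin m)}

theorem mem_scaledLattice_zero_iff {d : ℤ} {v : Fin (m + 1) → ℚ} :
    v ∈ scaledLattice d 0 ↔ v ∈ intLattice (Fin (m + 1)) := by
  simp [scaledLattice, mem_intLattice_iff, Fin.forall_fin_succ, Fin.tail]

theorem mulVec_mem_scaledLattice_iff (hcol : ∀ p : Fin m, U p.succ 0 = 0)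
    (hB : IsUnit (U.submatrix Fin.succ Fin.succ).det) (i : ℕ) (v : Fin (m + 1) → ℚ) :
    U.map (↑) *ᵥ v ∈ scaledLattice (U 0 0) i ↔ v ∈ scaledLattice (U 0 0) (i + 1) := by
  have htail : Fin.tail (U.map (↑) *ᵥ v) =
      (U.submatrix Fin.succ Fin.succ).map (↑) *ᵥ Fin.tail v := by
    rw [tail_mulVec_of_col_zero (by simp [hcol]), submatrix_map]
  simp only [scaledLattice, Set.mem_ofPred_eq, htail, map_intCast_mulVec_mem_intLattice_iff hB]
  refine and_congr_left fun hv => ?_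
  have hrow : ((fun j => U.map (↑) 0 j.succ) ⬝ᵥ Fin.tail v : ℚ) ∈ (⊥ : Subring ℚ) :=
    Subring.sum_mem _ fun j _ => mul_mem (intCast_mem _ _) (mem_intLattice_iff.1 hv j)
  rw [mulVec_apply_eq_add_dotProduct_tail, map_apply, mul_add, ← mul_assoc, ← pow_succ,
    add_mem_cancel_right (mul_mem (pow_mem (intCast_mem _ _) i) hrow)]

theorem iterate_mulVec_mem_intLattice_iff (hcol : ∀ p : Fin m, U p.succ 0 = 0)
    (hB : IsUnit (U.submatrix Fin.succ Fin.succ).det) (i : ℕ) (v : Fin (m + 1) → ℚ) :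
    (U.map (↑) *ᵥ ·)^[i] v ∈ intLattice (Fin (m + 1)) ↔ v ∈ scaledLattice (U 0 0) i := by
  induction i generalizing v with
  | zero => exact mem_scaledLattice_zero_iff.symm
  | succ i ih => rw [Function.iterate_succ_apply, ih, mulVec_mem_scaledLattice_iff hcol hB]

def zinvProdIntLattice (d : ℤ) (m : ℕ) : AddSubgroup (Fin (m + 1) → ℚ) :=
  ((Zinv d).prod (intLattice (Fin m))).map
    (Fin.consLinearEquiv ℤ fun _ : Fin (m + 1) => ℚ).toAddEquiv

theorem mem_zinvProdIntLattice_iff {d : ℤ} (hd : d ≠ 0) {v : Fin (m + 1) → ℚ} :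
    v ∈ zinvProdIntLattice d m ↔ ∃ i, v ∈ scaledLattice d i := by
  refine (AddSubgroup.mem_map_equiv
    (f := (Fin.consLinearEquiv ℤ fun _ : Fin (m + 1) => ℚ).toAddEquiv)).trans ?_
  simp only [AddSubgroup.mem_prod, scaledLattice, Set.mem_ofPred_eq, mem_Zinv_iff hd,
    exists_and_right]
  rfl

theorem isUnit_det_map_intCast (hcol : ∀ p : Fin m, U p.succ 0 = 0)
    (hB : IsUnit (U.submatrix Fin.succ Fin.succ).det) (h0 : U 0 0 ≠ 0) :
    IsUnit (U.map (Int.cast : ℤ → ℚ)).det := by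
  have hdet : (U.map (Int.cast : ℤ → ℚ)).det = (U.det : ℚ) :=
    (RingHom.map_det (Int.castRingHom ℚ) U).symm
  rw [isUnit_iff_ne_zero, hdet, det_eq_mul_det_submatrix_succ hcol]
  exact Int.cast_ne_zero.2 (mul_ne_zero h0 hB.ne_zero)

theorem range_liftOfSemiconj_intCastPi (hcol : ∀ p : Fin m, U p.succ 0 = 0)
    (hB : IsUnit (U.submatrix Fin.succ Fin.succ).det) (h0 : U 0 0 ≠ 0) :
    (Module.DirectLimit.liftOfSemiconj
      (semiconj_intCastPi (isUnit_det_map_intCast hcol hB h0))).toAddMonoidHom.range =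
      zinvProdIntLattice (U 0 0) m := by
  ext v
  rw [mem_zinvProdIntLattice_iff h0]
  exact (Module.DirectLimit.mem_range_liftOfSemiconj_iff (semiconj_intCastPi _)).trans
    (exists_congr fun i => iterate_mulVec_mem_intLattice_iff hcol hB i v)

noncomputable def directLimitMulVecAddEquiv (hcol : ∀ p : Fin m, U p.succ 0 = 0)
    (hB : IsUnit (U.submatrix Fin.succ Fin.succ).det) (h0 : U 0 0 ≠ 0) :
    Module.DirectLimit (fun _ : ℕ => Fin (m + 1) → ℤ) (fun i j _ => U.mulVecLin ^ (j - i)) ≃+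
      Zinv (U 0 0) × (Fin m → ℤ) :=
  (AddMonoidHom.ofInjective (Module.DirectLimit.liftOfSemiconj_injective
      (semiconj_intCastPi (isUnit_det_map_intCast hcol hB h0)) (intCastPi_injective _))).trans <|
    (AddEquiv.addSubgroupCongr (range_liftOfSemiconj_intCastPi hcol hB h0)).trans <|
    (AddEquiv.addSubgroupMap (Fin.consLinearEquiv ℤ fun _ : Fin (m + 1) => ℚ).toAddEquiv
      _).symm.trans <|
    (AddSubgroup.prodEquiv _ _).trans <|
    AddEquiv.prodCongr (AddEquiv.refl _) (AddMonoidHom.ofInjective (intCastPi_injective _)).symm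

end FirstColumn

/-- If `U` is an upper triangular integer matrix with diagonal `(λ₁,1,…,1)`, `λ₁ ≠ 0`,
then `lim→(U,ℤⁿ) ≅ ℤ[1/λ₁] ⊕ ℤⁿ⁻¹`. -/
theorem directLimit_upper_triangular_ones
    (m : ℕ) (U : Matrix (Fin (m + 1)) (Fin (m + 1)) ℤ)
    (hUt : ∀ i j : Fin (m + 1), j < i → U i j = 0)
    (h1 : ∀ i : Fin (m + 1), i ≠ 0 → U i i = 1)
    (h0 : U 0 0 ≠ 0) :
    Nonempty
      ((Module.DirectLimit (fun _ : ℕ => Fin (m + 1) → ℤ)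
          (fun i j _ => (U.mulVecLin ^ (j - i) :
            (Fin (m + 1) → ℤ) →ₗ[ℤ] (Fin (m + 1) → ℤ))))
        ≃+ (Zinv (U 0 0) × (Fin m → ℤ))) := by
  have hBt : (U.submatrix Fin.succ Fin.succ).IsUpperTriangular := fun p q hpq =>
    hUt _ _ (Fin.succ_lt_succ_iff.2 hpq)
  have hB : (U.submatrix Fin.succ Fin.succ).det = 1 := by
    rw [det_of_isUpperTriangular hBt]
    exact Finset.prod_eq_one fun p _ => h1 _ p.succ_ne_zero
  exact ⟨directLimitMulVecAddEquiv (fun p => hUt _ _ p.succ_pos) (hB ▸ isUnit_one) h0⟩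
end

section
/- Let B₂' be the 10 × 10 integer matrix with block form [[0, M₁],[0, M₂]], where M₂ is the 5 × 5 matrix with rows (2,2,2,1,1), (0,1,0,0,0), (1,2,3,1,1), (1,2,2,2,1), (1,2,2,1,2) and M₁ is any 5 × 5 integer matrix. Then the direct limit of the induced system (ℤ/2)⁵ ⊕ ℤ⁵ → (ℤ/2)⁵ ⊕ ℤ⁵ → ⋯, with each map given by B₂' acting via the block structure, is isomorphic to ℤ[1/6] ⊕ ℤ⁴. -/
open Matrix

namespace Module.DirectLimit

variable {R X Y : Type*} [Ring R] [AddCommGroup X] [Module R X] [AddCommGroup Y] [Module R Y]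
  {f : X →ₗ[R] X} {g : ℕ → X →ₗ[R] Y}

theorem apply_pow_sub_eq_of_apply_succ (hg : ∀ k x, g (k + 1) (f x) = g k x) {i j : ℕ}
    (hij : i ≤ j) (x : X) : g j ((f ^ (j - i)) x) = g i x := by
  obtain ⟨d, rfl⟩ := Nat.exists_eq_add_of_le hij
  rw [Nat.add_sub_cancel_left]
  clear hij
  induction d generalizing i x with
  | zero => rfl
  | succ d ih => rw [pow_succ, Module.End.mul_apply, show i + (d + 1) = i + 1 + d by omega, ih, hg]

variable (f g) in
noncomputable def liftPow (hg : ∀ k x, g (k + 1) (f x) = g k x) :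
    DirectLimit (fun _ : ℕ => X) (fun i j _ => f ^ (j - i)) →ₗ[R] Y :=
  lift R ℕ _ _ g fun _ _ hij => apply_pow_sub_eq_of_apply_succ hg hij

@[simp]
theorem liftPow_of (hg : ∀ k x, g (k + 1) (f x) = g k x) (k : ℕ) (x : X) :
    liftPow f g hg (of R ℕ (fun _ : ℕ => X) (fun i j _ => f ^ (j - i)) k x) = g k x :=
  lift_of ..

theorem liftPow_surjective (hg : ∀ k x, g (k + 1) (f x) = g k x)
    (hrange : ⨆ k, LinearMap.range (g k) = ⊤) : Function.Surjective (liftPow f g hg) := by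
  rw [← LinearMap.range_eq_top, eq_top_iff, ← hrange, iSup_le_iff]
  rintro k _ ⟨x, rfl⟩
  exact ⟨_, liftPow_of hg k x⟩

theorem liftPow_injective (hg : ∀ k x, g (k + 1) (f x) = g k x)
    (hker : ∀ k x, g k x = 0 → ∃ n, (f ^ n) x = 0) : Function.Injective (liftPow f g hg) := by
  rw [injective_iff_map_eq_zero]
  intro z hz
  obtain ⟨k, x, rfl⟩ := exists_of z
  obtain ⟨n, hn⟩ := hker k x (liftPow_of hg k x ▸ hz)
  rw [← of_f (hij := Nat.le_add_right k n), Nat.add_sub_cancel_left, hn, map_zero]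

variable (f g) in
noncomputable def equivOfPow (hg : ∀ k x, g (k + 1) (f x) = g k x)
    (hrange : ⨆ k, LinearMap.range (g k) = ⊤) (hker : ∀ k x, g k x = 0 → ∃ n, (f ^ n) x = 0) :
    DirectLimit (fun _ : ℕ => X) (fun i j _ => f ^ (j - i)) ≃ₗ[R] Y :=
  .ofBijective (liftPow f g hg) ⟨liftPow_injective hg hker, liftPow_surjective hg hrange⟩

end Module.DirectLimit

namespace Zinv

theorem inv_pow_mem (d : ℤ) (k : ℕ) : ((d : ℚ) ^ k)⁻¹ ∈ Zinv d :=
  AddSubgroup.subset_closure ⟨k, rfl⟩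

theorem exists_eq_zsmul_inv_pow {d : ℤ} (hd : d ≠ 0) {q : ℚ} (hq : q ∈ Zinv d) :
    ∃ (k : ℕ) (a : ℤ), q = a • ((d : ℚ) ^ k)⁻¹ := by
  have hd' : (d : ℚ) ≠ 0 := Int.cast_ne_zero.mpr hd
  induction hq using AddSubgroup.closure_induction with
  | mem q hq =>
    obtain ⟨k, rfl⟩ := hq
    exact ⟨k, 1, (one_zsmul _).symm⟩
  | zero => exact ⟨0, 0, (zero_zsmul _).symm⟩
  | add q r _ _ hq hr =>
    obtain ⟨k, a, rfl⟩ := hq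
    obtain ⟨l, b, rfl⟩ := hr
    refine ⟨k + l, a * d ^ l + b * d ^ k, ?_⟩
    simp only [zsmul_eq_mul]
    push_cast
    field_simp
    ring
  | neg q _ hq =>
    obtain ⟨k, a, rfl⟩ := hq
    exact ⟨k, -a, (neg_zsmul _ _).symm⟩

end Zinv

def blockMap {n : ℕ} (M₁ M₂ : Matrix (Fin n) (Fin n) ℤ) :
    ((Fin n → ZMod 2) × (Fin n → ℤ)) →ₗ[ℤ] ((Fin n → ZMod 2) × (Fin n → ℤ)) :=
  let c : ℤ →ₗ[ℤ] ZMod 2 := (Int.castRingHom (ZMod 2)).toAddMonoidHom.toIntLinearMap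
  LinearMap.prod
    ((LinearMap.pi fun i : Fin n => c.comp ((LinearMap.proj i).comp M₁.mulVecLin)).comp
      (LinearMap.snd ℤ (Fin n → ZMod 2) (Fin n → ℤ)))
    (M₂.mulVecLin.comp (LinearMap.snd ℤ (Fin n → ZMod 2) (Fin n → ℤ)))

theorem blockMap_eq_zero_of_snd_eq_zero {n : ℕ} (M₁ M₂ : Matrix (Fin n) (Fin n) ℤ)
    (x : (Fin n → ZMod 2) × (Fin n → ℤ)) (hx : x.2 = 0) : blockMap M₁ M₂ x = 0 := by
  simp [blockMap, hx]

namespace BlockSystem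

def u : Fin 5 → ℤ := ![1, 0, 1, 1, 1]

def w : Fin 5 → ℤ := ![1, 2, 2, 1, 1]

def M₂ : Matrix (Fin 5) (Fin 5) ℤ :=
  !![2, 2, 2, 1, 1;
     0, 1, 0, 0, 0;
     1, 2, 3, 1, 1;
     1, 2, 2, 2, 1;
     1, 2, 2, 1, 2]

theorem M₂_eq : M₂ = 1 + vecMulVec u w := by
  ext i j
  fin_cases i <;> fin_cases j <;> rfl

theorem M₂_mulVec (v : Fin 5 → ℤ) : M₂ *ᵥ v = v + (w ⬝ᵥ v) • u := by
  rw [M₂_eq, add_mulVec, one_mulVec, vecMulVec_mulVec, op_smul_eq_smul]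

theorem w_dotProduct_u : w ⬝ᵥ u = 5 := rfl

theorem w_dotProduct_M₂_mulVec (v : Fin 5 → ℤ) : w ⬝ᵥ (M₂ *ᵥ v) = 6 * (w ⬝ᵥ v) := by
  rw [M₂_mulVec, dotProduct_add, dotProduct_smul, w_dotProduct_u, smul_eq_mul]
  ring

def twist (k : ℕ) : ℚ := (((6 : ℚ) ^ k)⁻¹ - 1) / 5

theorem twist_zero : twist 0 = 0 := by simp [twist]

theorem one_add_five_mul_twist (k : ℕ) : 1 + 5 * twist k = ((6 : ℚ) ^ k)⁻¹ := by
  rw [twist]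
  ring

theorem one_add_six_mul_twist_succ (k : ℕ) : 1 + 6 * twist (k + 1) = twist k := by
  rw [twist, twist, pow_succ, mul_inv]
  ring

theorem twist_mem (k : ℕ) : twist k ∈ Zinv 6 := by
  obtain ⟨t, ht⟩ := sub_one_dvd_pow_sub_one (6 : ℤ) k
  have ht' : (6 : ℚ) ^ k - 1 = 5 * t := by exact_mod_cast ht
  have : twist k = (-t) • ((((6 : ℤ) : ℚ)) ^ k)⁻¹ := by
    have hinv : (6 : ℚ) ^ k * ((6 : ℚ) ^ k)⁻¹ = 1 := mul_inv_cancel₀ (by positivity)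
    rw [twist, zsmul_eq_mul]
    push_cast
    linear_combination hinv / 5 - ((6 : ℚ) ^ k)⁻¹ / 5 * ht'
  rw [this]
  exact zsmul_mem (Zinv.inv_pow_mem 6 k) _

def rationalCoord (k : ℕ) : (Fin 5 → ℤ) →+ ℚ :=
  AddMonoidHom.mk' (fun v => v 0 + twist k * (w ⬝ᵥ v : ℤ)) fun v v' => by
    push_cast [Pi.add_apply, dotProduct_add]
    ring

theorem rationalCoord_apply (k : ℕ) (v : Fin 5 → ℤ) :
    rationalCoord k v = v 0 + twist k * (w ⬝ᵥ v : ℤ) := rfl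

theorem rationalCoord_mem (k : ℕ) (v : Fin 5 → ℤ) : rationalCoord k v ∈ Zinv 6 := by
  rw [rationalCoord_apply, ← zsmul_one, mul_comm, ← zsmul_eq_mul]
  exact add_mem (zsmul_mem (by simpa using Zinv.inv_pow_mem 6 0) _) (zsmul_mem (twist_mem k) _)

theorem rationalCoord_succ_M₂_mulVec (k : ℕ) (v : Fin 5 → ℤ) :
    rationalCoord (k + 1) (M₂ *ᵥ v) = rationalCoord k v := by
  rw [rationalCoord_apply, rationalCoord_apply, w_dotProduct_M₂_mulVec, M₂_mulVec,
    ← one_add_six_mul_twist_succ k]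
  simp only [Pi.add_apply, Pi.smul_apply, smul_eq_mul, u]
  push_cast
  ring

theorem rationalCoord_smul_u (k : ℕ) (a : ℤ) : rationalCoord k (a • u) = a • ((6 : ℚ) ^ k)⁻¹ := by
  rw [rationalCoord_apply, dotProduct_smul, w_dotProduct_u, ← one_add_five_mul_twist]
  simp only [Pi.smul_apply, smul_eq_mul, zsmul_eq_mul, u]
  push_cast
  ring

def integerCoords : (Fin 5 → ℤ) →ₗ[ℤ] (Fin 4 → ℤ) :=
  LinearMap.funLeft ℤ ℤ Fin.succ ∘ₗ (LinearMap.id - (LinearMap.proj 0).smulRight u)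

theorem integerCoords_apply (v : Fin 5 → ℤ) (i : Fin 4) :
    integerCoords v i = v i.succ - v 0 * u i.succ := rfl

theorem integerCoords_u : integerCoords u = 0 := by
  ext i
  fin_cases i <;> rfl

theorem integerCoords_M₂_mulVec (v : Fin 5 → ℤ) : integerCoords (M₂ *ᵥ v) = integerCoords v := by
  rw [M₂_mulVec, map_add, map_smul, integerCoords_u, smul_zero, add_zero]

theorem eq_smul_u_of_integerCoords_eq_zero {v : Fin 5 → ℤ} (hv : integerCoords v = 0) :
    v = v 0 • u := by
  ext i
  refine Fin.cases (by simp [u]) (fun i => ?_) i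
  have hi := congrFun hv i
  rw [integerCoords_apply, Pi.zero_apply, sub_eq_zero] at hi
  rw [hi, Pi.smul_apply, smul_eq_mul]

def levelMap (k : ℕ) : (Fin 5 → ℤ) →ₗ[ℤ] Zinv 6 × (Fin 4 → ℤ) :=
  ((rationalCoord k).codRestrict (Zinv 6) (rationalCoord_mem k)).toIntLinearMap.prod integerCoords

theorem levelMap_succ_M₂_mulVec (k : ℕ) (v : Fin 5 → ℤ) :
    levelMap (k + 1) (M₂ *ᵥ v) = levelMap k v :=
  Prod.ext (Subtype.ext (rationalCoord_succ_M₂_mulVec k v)) (integerCoords_M₂_mulVec v)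

theorem levelMap_injective (k : ℕ) : Function.Injective (levelMap k) := by
  rw [injective_iff_map_eq_zero]
  intro v hv
  have hint : integerCoords v = 0 := congrArg Prod.snd hv
  have hrat : rationalCoord k v = 0 := congrArg (fun y => (y.1 : ℚ)) hv
  rw [eq_smul_u_of_integerCoords_eq_zero hint, rationalCoord_smul_u, smul_eq_zero] at hrat
  rw [eq_smul_u_of_integerCoords_eq_zero hint, hrat.resolve_right (by positivity), zero_smul]

theorem iSup_range_levelMap : ⨆ k, LinearMap.range (levelMap k) = ⊤ := by
  refine eq_top_iff.2 fun ⟨⟨q, hq⟩, b⟩ _ => ?_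
  obtain ⟨k, a, rfl⟩ := Zinv.exists_eq_zsmul_inv_pow (by norm_num) hq
  have hsum : ((⟨_, hq⟩, b) : Zinv 6 × (Fin 4 → ℤ)) =
      levelMap k (a • u) + levelMap 0 (Fin.cons 0 b) := by
    refine Prod.ext (Subtype.ext ?_) ?_
    · show a • (((6 : ℤ) : ℚ) ^ k)⁻¹ = rationalCoord k (a • u) + rationalCoord 0 (Fin.cons 0 b)
      rw [rationalCoord_smul_u, rationalCoord_apply, twist_zero, Fin.cons_zero, Int.cast_zero,
        zero_mul, add_zero, add_zero, Int.cast_ofNat]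
    · show b = integerCoords (a • u) + integerCoords (Fin.cons 0 b)
      rw [map_smul, integerCoords_u, smul_zero, zero_add]
      ext i
      simp [integerCoords_apply]
  rw [hsum]
  exact add_mem (Submodule.mem_iSup_of_mem k ⟨_, rfl⟩) (Submodule.mem_iSup_of_mem 0 ⟨_, rfl⟩)

end BlockSystem

open BlockSystem Module.DirectLimit

/-- The direct limit of the system `(ℤ/2)⁵ ⊕ ℤ⁵ → (ℤ/2)⁵ ⊕ ℤ⁵ → ⋯`, where each map is
`B₂' = [[0, M₁],[0, M₂]]` acting blockwise, `(u,v) ↦ (M₁v mod 2, M₂v)`, is isomorphic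
to `ℤ[1/6] ⊕ ℤ⁴`, for the explicit matrix `M₂` and any integer matrix `M₁`. -/
theorem directLimit_block_system (M₁ : Matrix (Fin 5) (Fin 5) ℤ) :
    let M₂ : Matrix (Fin 5) (Fin 5) ℤ :=
      !![2, 2, 2, 1, 1;
         0, 1, 0, 0, 0;
         1, 2, 3, 1, 1;
         1, 2, 2, 2, 1;
         1, 2, 2, 1, 2]
    let c : ℤ →ₗ[ℤ] ZMod 2 := (Int.castRingHom (ZMod 2)).toAddMonoidHom.toIntLinearMap
    let f : ((Fin 5 → ZMod 2) × (Fin 5 → ℤ)) →ₗ[ℤ] ((Fin 5 → ZMod 2) × (Fin 5 → ℤ)) :=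
      LinearMap.prod
        ((LinearMap.pi fun i : Fin 5 =>
            c.comp ((LinearMap.proj i).comp M₁.mulVecLin)).comp
          (LinearMap.snd ℤ (Fin 5 → ZMod 2) (Fin 5 → ℤ)))
        (M₂.mulVecLin.comp (LinearMap.snd ℤ (Fin 5 → ZMod 2) (Fin 5 → ℤ)))
    Nonempty
      ((Module.DirectLimit (fun _ : ℕ => (Fin 5 → ZMod 2) × (Fin 5 → ℤ))
          (fun i j _ => (f ^ (j - i) :
            ((Fin 5 → ZMod 2) × (Fin 5 → ℤ)) →ₗ[ℤ] ((Fin 5 → ZMod 2) × (Fin 5 → ℤ)))))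
        ≃+ (Zinv 6 × (Fin 4 → ℤ))) := by
  intro _ _ _
  let g k := levelMap k ∘ₗ LinearMap.snd ℤ (Fin 5 → ZMod 2) (Fin 5 → ℤ)
  have hg (k : ℕ) x : g (k + 1) (blockMap M₁ M₂ x) = g k x := levelMap_succ_M₂_mulVec k x.2
  have hrange : ⨆ k, LinearMap.range (g k) = ⊤ := by
    simp_rw [g, LinearMap.range_comp_of_range_eq_top _ Submodule.range_snd]
    exact iSup_range_levelMap
  have hker (k : ℕ) x (hx : g k x = 0) : ∃ n, (blockMap M₁ M₂ ^ n) x = 0 := by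
    have hx₂ : x.2 = 0 := levelMap_injective k (hx.trans (map_zero _).symm)
    exact ⟨1, by rw [pow_one]; exact blockMap_eq_zero_of_snd_eq_zero M₁ M₂ x hx₂⟩
  exact ⟨(equivOfPow (blockMap M₁ M₂) g hg hrange hker).toAddEquiv⟩
end
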